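/- Define g(z_1, z_2, z_3) = (1/n)(z_1 s_1 + z_2 s_2 + z_3 s_3)² − (z_1 s_1² + z_2 s_2² + z_3 s_3²). Suppose x_1, x_2, x_3 and N_1, N_2, N_3 are positive reals with N_1 ≤ x_1 + 1, N_3 ≤ x_3 + 1, N_2 ≤ x_2 + 2, each x_i ≥ N₀, N₀ > n > 0, and each x_i s_i²(x_i/n − 1) ≥ 0 as well as x_i > n. Then g(N_1, N_2, N_3) ≤ (1 + 2/N₀ + 2/(N₀−n) + 4/(N₀(N₀−n)))·g(x_1, x_2, x_3). -/
import Mathlib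
set_option maxHeartbeats 1000000

lemma key_diag (n N0 x N : ℝ) (hn : 0 < n) (hN0 : n < N0) (hx : N0 ≤ x)
    (hNpos : 0 < N) (hN : N ≤ x + 2) :
    N0 * (N0 - n) * (N * (N - n)) ≤ (N0 + 2) * (N0 - n + 2) * (x * (x - n)) := by
  have h0 : 0 < N0 := lt_trans hn hN0
  have h1 : 0 < N0 - n := by linarith
  have step1 : N * (N - n) ≤ (x + 2) * (x + 2 - n) := by
    nlinarith [mul_nonneg (by linarith : (0:ℝ) ≤ x + 2 - N) (by linarith : (0:ℝ) ≤ x + 2 + N - n)]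
  have step2 : N0 * (N0 - n) * ((x + 2) * (x + 2 - n)) ≤ (N0 + 2) * (N0 - n + 2) * (x * (x - n)) := by
    nlinarith [mul_nonneg (mul_nonneg h0.le (by linarith : (0:ℝ) ≤ x)) (by linarith : (0:ℝ) ≤ x - N0),
      mul_nonneg (mul_nonneg h1.le (by linarith : (0:ℝ) ≤ x - n)) (by linarith : (0:ℝ) ≤ x - N0),
      mul_nonneg (by linarith : (0:ℝ) ≤ x - N0) (by linarith : (0:ℝ) ≤ (x - n) - (N0 - n)),
      mul_nonneg (mul_nonneg h0.le h1.le) (mul_nonneg (by linarith : (0:ℝ) ≤ x - N0) (by linarith : (0:ℝ) ≤ x - n - (N0 - n)))]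
  nlinarith [mul_le_mul_of_nonneg_left step1 (mul_nonneg h0.le h1.le)]

lemma key_cross (n N0 u w Nu Nw : ℝ) (hn : 0 < n) (hN0 : n < N0) (hu : N0 ≤ u) (hw : N0 ≤ w)
    (hNu : 0 < Nu) (hNw : 0 < Nw) (hu2 : Nu ≤ u + 2) (hw2 : Nw ≤ w + 2) :
    N0 * (N0 - n) * (Nu * Nw) ≤ (N0 + 2) * (N0 - n + 2) * (u * w) := by
  have h0 : 0 < N0 := lt_trans hn hN0
  have h1 : 0 < N0 - n := by linarith
  have step1 : Nu * Nw ≤ (u + 2) * (w + 2) := by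
    nlinarith [mul_nonneg (by linarith : (0:ℝ) ≤ u + 2 - Nu) (by linarith : (0:ℝ) ≤ Nw),
      mul_nonneg (by linarith : (0:ℝ) ≤ w + 2 - Nw) (by linarith : (0:ℝ) ≤ u + 2)]
  have step2 : N0 * (N0 - n) * ((u + 2) * (w + 2)) ≤ (N0 + 2) * (N0 - n + 2) * (u * w) := by
    nlinarith [mul_nonneg (mul_nonneg h0.le (by linarith : (0:ℝ) ≤ u)) (by linarith : (0:ℝ) ≤ w - N0 + n),
      mul_nonneg (mul_nonneg h1.le (by linarith : (0:ℝ) ≤ w)) (by linarith : (0:ℝ) ≤ u - N0),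
      mul_nonneg (by linarith : (0:ℝ) ≤ u - N0) (by linarith : (0:ℝ) ≤ w - N0),
      mul_nonneg (mul_nonneg h0.le h1.le) (mul_nonneg (by linarith : (0:ℝ) ≤ u - N0) (by linarith : (0:ℝ) ≤ w - N0))]
  nlinarith [mul_le_mul_of_nonneg_left step1 (mul_nonneg h0.le h1.le)]

/-- Approximation bound for rounding to integer stratum boundaries (DirSol):
with `g(z₁,z₂,z₃) = (1/n)(z₁s₁+z₂s₂+z₃s₃)² − (z₁s₁²+z₂s₂²+z₃s₃²)`, if the
rounded sizes `N_i` exceed the optimal fractional sizes `x_i` by at most `1,2,1`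
respectively and `x_i ≥ N₀ > n > 0`, then
`g(N₁,N₂,N₃) ≤ (1 + 2/N₀ + 2/(N₀−n) + 4/(N₀(N₀−n))) · g(x₁,x₂,x₃)`. -/
theorem dirsol_rounding_bound (n N0 s1 s2 s3 x1 x2 x3 N1 N2 N3 : ℝ)
    (hs1 : 0 ≤ s1) (hs2 : 0 ≤ s2) (hs3 : 0 ≤ s3)
    (hn : 0 < n) (hN0 : n < N0)
    (hx1 : N0 ≤ x1) (hx2 : N0 ≤ x2) (hx3 : N0 ≤ x3)
    (hN1pos : 0 < N1) (hN2pos : 0 < N2) (hN3pos : 0 < N3)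
    (hN1 : N1 ≤ x1 + 1) (hN3 : N3 ≤ x3 + 1) (hN2 : N2 ≤ x2 + 2)
    (hx1n : n < x1) (hx2n : n < x2) (hx3n : n < x3)
    (ht1 : 0 ≤ x1 * s1 ^ 2 * (x1 / n - 1))
    (ht2 : 0 ≤ x2 * s2 ^ 2 * (x2 / n - 1))
    (ht3 : 0 ≤ x3 * s3 ^ 2 * (x3 / n - 1)) :
    (1 / n) * (N1 * s1 + N2 * s2 + N3 * s3) ^ 2
        - (N1 * s1 ^ 2 + N2 * s2 ^ 2 + N3 * s3 ^ 2)
      ≤ (1 + 2 / N0 + 2 / (N0 - n) + 4 / (N0 * (N0 - n))) *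
        ((1 / n) * (x1 * s1 + x2 * s2 + x3 * s3) ^ 2
          - (x1 * s1 ^ 2 + x2 * s2 ^ 2 + x3 * s3 ^ 2)) := by
  have h0 : 0 < N0 := lt_trans hn hN0
  have h1 : 0 < N0 - n := by linarith
  -- diagonal bounds
  have hd1 := key_diag n N0 x1 N1 hn hN0 hx1 hN1pos (by linarith)
  have hd2 := key_diag n N0 x2 N2 hn hN0 hx2 hN2pos (by linarith)
  have hd3 := key_diag n N0 x3 N3 hn hN0 hx3 hN3pos (by linarith)
  -- cross bounds
  have hc12 := key_cross n N0 x1 x2 N1 N2 hn hN0 hx1 hx2 hN1pos hN2pos (by linarith) (by linarith)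
  have hc13 := key_cross n N0 x1 x3 N1 N3 hn hN0 hx1 hx3 hN1pos hN3pos (by linarith) (by linarith)
  have hc23 := key_cross n N0 x2 x3 N2 N3 hn hN0 hx2 hx3 hN2pos hN3pos (by linarith) (by linarith)
  -- multiply by squares / products of s's
  have m1 := mul_le_mul_of_nonneg_right hd1 (sq_nonneg s1)
  have m2 := mul_le_mul_of_nonneg_right hd2 (sq_nonneg s2)
  have m3 := mul_le_mul_of_nonneg_right hd3 (sq_nonneg s3)
  have m12 := mul_le_mul_of_nonneg_right hc12 (mul_nonneg hs1 hs2)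
  have m13 := mul_le_mul_of_nonneg_right hc13 (mul_nonneg hs1 hs3)
  have m23 := mul_le_mul_of_nonneg_right hc23 (mul_nonneg hs2 hs3)
  set GN := (N1 * s1 + N2 * s2 + N3 * s3) ^ 2 - n * (N1 * s1 ^ 2 + N2 * s2 ^ 2 + N3 * s3 ^ 2) with hGN
  set Gx := (x1 * s1 + x2 * s2 + x3 * s3) ^ 2 - n * (x1 * s1 ^ 2 + x2 * s2 ^ 2 + x3 * s3 ^ 2) with hGx
  have H : N0 * (N0 - n) * GN ≤ (N0 + 2) * (N0 - n + 2) * Gx := by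
    rw [hGN, hGx]
    linarith [m1, m2, m3, m12, m13, m23]
  have e : (1 + 2 / N0 + 2 / (N0 - n) + 4 / (N0 * (N0 - n))) *
        ((1 / n) * (x1 * s1 + x2 * s2 + x3 * s3) ^ 2
          - (x1 * s1 ^ 2 + x2 * s2 ^ 2 + x3 * s3 ^ 2))
      - ((1 / n) * (N1 * s1 + N2 * s2 + N3 * s3) ^ 2
        - (N1 * s1 ^ 2 + N2 * s2 ^ 2 + N3 * s3 ^ 2))
      = ((N0 + 2) * (N0 - n + 2) * Gx - N0 * (N0 - n) * GN) / (n * (N0 * (N0 - n))) := by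
    rw [hGN, hGx]; field_simp; ring
  have hpos : (0:ℝ) < n * (N0 * (N0 - n)) := by positivity
  have hnn : 0 ≤ ((N0 + 2) * (N0 - n + 2) * Gx - N0 * (N0 - n) * GN) / (n * (N0 * (N0 - n))) :=
    div_nonneg (by linarith) hpos.le
  linarith [e ▸ hnn]
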